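/- Let K be a simplicial complex on the set [m] = {1,…,m}. Let cone(K) be the simplicial complex on [m+1] whose members are the sets I and I ∪ {m+1} for I ∈ K, and let |cone(K)| = ⋃_{I∈cone(K), I≠∅} conv{e_i : i ∈ I} ⊆ ℝ^{m+1} be its geometric realization. Let cc(K) = ⋃_{J∈K} C_J ⊆ [0,1]^m, where C_J = {y ∈ [0,1]^m : y_i = 1 for all i ∉ J}. Then the subspaces |cone(K)| ⊆ ℝ^{m+1} and cc(K) ⊆ ℝ^m are homeomorphic. -/

import Mathlib

/-- The geometric realization |L| ⊆ ℝ^N of a simplicial complex `L` on `[N]`. -/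
def geomRealization (N : ℕ) (L : Set (Finset (Fin N))) : Set (Fin N → ℝ) :=
  ⋃ I ∈ {I : Finset (Fin N) | I ∈ L ∧ I.Nonempty},
    convexHull ℝ ((fun i => Pi.single i (1 : ℝ)) '' (I : Set (Fin N)))

/-- The cone over `K`: the simplicial complex on `[m+1]` whose members are the sets
`I` and `I ∪ {m+1}` for `I ∈ K`. -/
def coneComplex (m : ℕ) (K : Set (Finset (Fin m))) : Set (Finset (Fin (m + 1))) :=
  {J | ∃ I ∈ K, J = I.image Fin.castSucc ∨
       J = insert (Fin.last m) (I.image Fin.castSucc)}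

/-- The cubical subcomplex cc(K) = ⋃_{J∈K} C_J of the cube [0,1]^m. -/
def ccK (m : ℕ) (K : Set (Finset (Fin m))) : Set (Fin m → ℝ) :=
  {y | ∃ J ∈ K, (∀ i, 0 ≤ y i ∧ y i ≤ 1) ∧ ∀ i, i ∉ J → y i = 1}

open Finset
set_option linter.unusedSectionVars false
set_option linter.unusedVariables false

lemma hull_char (N : ℕ) (J : Finset (Fin N)) :
    convexHull ℝ ((fun i => Pi.single i (1 : ℝ)) '' (J : Set (Fin N))) =
      {x : Fin N → ℝ | (∀ i, 0 ≤ x i) ∧ (∑ i, x i) = 1 ∧ ∀ i ∉ J, x i = 0} := by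
  apply le_antisymm
  · apply convexHull_min
    · rintro _ ⟨i, hi, rfl⟩
      refine ⟨fun k => ?_, ?_, fun k hk => ?_⟩
      · rcases eq_or_ne k i with rfl | h
        · simp
        · simp [Pi.single_apply, h]
      · simp [Pi.single_apply]
      · have : k ≠ i := fun h => hk (h ▸ hi)
        simp [Pi.single_apply, this]
    · intro x hx y hy a b ha hb hab
      refine ⟨fun i => ?_, ?_, fun i hi => ?_⟩
      · have := hx.1 i; have := hy.1 i
        simp only [Pi.add_apply, Pi.smul_apply, smul_eq_mul]
        positivity
      · simp only [Pi.add_apply, Pi.smul_apply, smul_eq_mul]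
        rw [Finset.sum_add_distrib, ← Finset.mul_sum, ← Finset.mul_sum, hx.2.1, hy.2.1]
        simpa using hab
      · simp [hx.2.2 i hi, hy.2.2 i hi]
  · rintro x ⟨hx0, hxs, hxz⟩
    have hsumJ : ∑ i ∈ J, x i = 1 := by
      rw [← hxs]
      exact Finset.sum_subset (Finset.subset_univ J) (fun i _ hi => hxz i hi)
    have hmem := Finset.centerMass_mem_convexHull (w := x) (z := fun i => Pi.single i (1:ℝ)) J (fun i _ => hx0 i)
      (by rw [hsumJ]; norm_num)
      (fun i hi => Set.mem_image_of_mem _ (by exact_mod_cast hi))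
    convert hmem using 1
    rw [Finset.centerMass_eq_of_sum_1 _ _ hsumJ]
    funext k
    rw [Finset.sum_apply]
    simp only [Pi.smul_apply, Pi.single_apply, smul_eq_mul, mul_ite, mul_one, mul_zero]
    rw [Finset.sum_ite_eq]
    by_cases hk : k ∈ J
    · simp [hk]
    · simp [hk, hxz k hk]

lemma memA_iff (m : ℕ) (K : Set (Finset (Fin m))) (x : Fin (m + 1) → ℝ) :
    x ∈ geomRealization (m + 1) (coneComplex m K) ↔
      (∀ i, 0 ≤ x i) ∧ (∑ i, x i) = 1 ∧ ∃ I ∈ K, ∀ i ∉ I, x i.castSucc = 0 := by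
  simp only [geomRealization, Set.mem_iUnion, Set.mem_setOf_eq, exists_prop]
  constructor
  · rintro ⟨J, ⟨⟨I, hIK, hJ | hJ⟩, hJne⟩, hxJ⟩ <;> subst hJ <;>
      rw [hull_char] at hxJ <;>
      refine ⟨hxJ.1, hxJ.2.1, I, hIK, fun i hi => hxJ.2.2 _ ?_⟩
    · simp only [Finset.mem_image, not_exists]
      rintro a ⟨ha, hai⟩
      exact hi ((Fin.castSucc_injective m hai) ▸ ha)
    · simp only [Finset.mem_insert, Finset.mem_image, not_or, not_exists]
      refine ⟨(Fin.castSucc_lt_last i).ne, ?_⟩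
      rintro a ⟨ha, hai⟩
      exact hi ((Fin.castSucc_injective m hai) ▸ ha)
  · rintro ⟨hx0, hxs, I, hIK, hIz⟩
    refine ⟨insert (Fin.last m) (I.image Fin.castSucc), ⟨⟨I, hIK, Or.inr rfl⟩,
      Finset.insert_nonempty _ _⟩, ?_⟩
    rw [hull_char]
    refine ⟨hx0, hxs, fun k hk => ?_⟩
    simp only [Finset.mem_insert, Finset.mem_image, not_or, not_exists] at hk
    obtain ⟨i, rfl⟩ := Fin.exists_castSucc_eq.2 hk.1
    refine hIz i fun hi => ?_
    have := hk.2 i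
    simp [hi] at this

noncomputable def Sf (m : ℕ) (x : Fin (m + 1) → ℝ) : ℝ := ∑ j : Fin m, x j.castSucc

noncomputable def Mf (m : ℕ) [NeZero m] (x : Fin (m + 1) → ℝ) : ℝ :=
  Finset.univ.sup' Finset.univ_nonempty (fun j : Fin m => x j.castSucc)

noncomputable def Ff (m : ℕ) [NeZero m] (x : Fin (m + 1) → ℝ) : Fin m → ℝ :=
  fun i => 1 - x i.castSucc * (Sf m x / Mf m x)

noncomputable def Nf (m : ℕ) [NeZero m] (y : Fin m → ℝ) : ℝ :=
  Finset.univ.sup' Finset.univ_nonempty (fun i => 1 - y i)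

noncomputable def Tf (m : ℕ) (y : Fin m → ℝ) : ℝ := ∑ i, (1 - y i)

noncomputable def Gf (m : ℕ) [NeZero m] (y : Fin m → ℝ) : Fin (m + 1) → ℝ :=
  Fin.lastCases (1 - Nf m y) (fun i => (1 - y i) * (Nf m y / Tf m y))

section Core
variable {m : ℕ} [NeZero m]

@[simp] lemma Gf_castSucc (y : Fin m → ℝ) (i : Fin m) :
    Gf m y i.castSucc = (1 - y i) * (Nf m y / Tf m y) := by
  simp [Gf]

@[simp] lemma Gf_last (y : Fin m → ℝ) : Gf m y (Fin.last m) = 1 - Nf m y := by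
  simp [Gf]

lemma sup'_mul_const {ι : Type*} [Fintype ι] [Nonempty ι] (f : ι → ℝ) (c : ℝ) (hc : 0 ≤ c) :
    Finset.univ.sup' Finset.univ_nonempty (fun i => f i * c) =
      (Finset.univ.sup' Finset.univ_nonempty f) * c := by
  exact (Finset.comp_sup'_eq_sup'_comp _ (fun z => z * c)
    (fun a b => by
      exact max_mul_of_nonneg _ _ hc)).symm

lemma le_Mf (x : Fin (m + 1) → ℝ) (i : Fin m) : x i.castSucc ≤ Mf m x := by
  unfold Mf; exact Finset.le_sup' (fun j : Fin m => x j.castSucc) (Finset.mem_univ i)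

lemma Mf_nonneg {x : Fin (m + 1) → ℝ} (hx0 : ∀ i, 0 ≤ x i) : 0 ≤ Mf m x :=
  le_trans (hx0 _) (le_Mf x (Classical.arbitrary _))

lemma Sf_nonneg {x : Fin (m + 1) → ℝ} (hx0 : ∀ i, 0 ≤ x i) : 0 ≤ Sf m x :=
  Finset.sum_nonneg fun i _ => hx0 _

lemma Mf_le_Sf {x : Fin (m + 1) → ℝ} (hx0 : ∀ i, 0 ≤ x i) : Mf m x ≤ Sf m x :=
  Finset.sup'_le _ _ fun j _ =>
    Finset.single_le_sum (f := fun j : Fin m => x j.castSucc) (fun i _ => hx0 _)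
      (Finset.mem_univ j)

lemma sum_eq_Sf_add_last (x : Fin (m + 1) → ℝ) :
    ∑ i, x i = Sf m x + x (Fin.last m) := by
  rw [Fin.sum_univ_castSucc]; rfl

lemma Sf_le_one {x : Fin (m + 1) → ℝ} (hx0 : ∀ i, 0 ≤ x i) (hs : ∑ i, x i = 1) :
    Sf m x ≤ 1 := by
  have := sum_eq_Sf_add_last (m := m) x
  have := hx0 (Fin.last m)
  linarith

lemma Mf_eq_zero {x : Fin (m + 1) → ℝ} (hx0 : ∀ i, 0 ≤ x i) (h : Mf m x = 0) (i : Fin m) :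
    x i.castSucc = 0 :=
  le_antisymm (h ▸ le_Mf x i) (hx0 _)

lemma Mf_ne_zero_of_Sf {x : Fin (m + 1) → ℝ} (hx0 : ∀ i, 0 ≤ x i) (h : Sf m x ≠ 0) :
    Mf m x ≠ 0 := by
  intro hM
  exact h (Finset.sum_eq_zero fun i _ => Mf_eq_zero hx0 hM i)

lemma le_Nf (y : Fin m → ℝ) (i : Fin m) : 1 - y i ≤ Nf m y := by
  unfold Nf; exact Finset.le_sup' (fun i => 1 - y i) (Finset.mem_univ i)

lemma Nf_nonneg {y : Fin m → ℝ} (hy : ∀ i, y i ≤ 1) : 0 ≤ Nf m y := by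
  have := le_Nf y (Classical.arbitrary _)
  have := hy (Classical.arbitrary (Fin m))
  linarith

lemma Nf_le_one {y : Fin m → ℝ} (hy : ∀ i, 0 ≤ y i) : Nf m y ≤ 1 :=
  Finset.sup'_le _ _ fun i _ => by have := hy i; linarith

lemma Nf_le_Tf {y : Fin m → ℝ} (hy : ∀ i, y i ≤ 1) : Nf m y ≤ Tf m y :=
  Finset.sup'_le _ _ fun i _ =>
    Finset.single_le_sum (f := fun i => 1 - y i) (fun j _ => by have := hy j; linarith)
      (Finset.mem_univ i)

lemma Tf_nonneg {y : Fin m → ℝ} (hy : ∀ i, y i ≤ 1) : 0 ≤ Tf m y :=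
  Finset.sum_nonneg fun i _ => by have := hy i; linarith

lemma Tf_eq_zero {y : Fin m → ℝ} (hy : ∀ i, y i ≤ 1) (h : Tf m y = 0) (i : Fin m) :
    y i = 1 := by
  have := (Finset.sum_eq_zero_iff_of_nonneg
    (fun i _ => by have := hy i; linarith)).1 h i (Finset.mem_univ i)
  linarith

lemma Nf_eq_zero_iff_Tf {y : Fin m → ℝ} (hy : ∀ i, y i ≤ 1) :
    Nf m y = 0 ↔ Tf m y = 0 := by
  constructor
  · intro h
    exact Finset.sum_eq_zero fun i _ => by
      have h1 := le_Nf y i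
      have h2 := hy i
      rw [h] at h1; linarith
  · intro h
    have : ∀ i, 1 - y i = 0 := fun i => by have := Tf_eq_zero hy h i; linarith
    have hN := Nf_le_Tf hy
    have hN2 := Nf_nonneg hy
    linarith

lemma Sf_Gf {y : Fin m → ℝ} (hy1 : ∀ i, y i ≤ 1) : Sf m (Gf m y) = Nf m y := by
  unfold Sf
  simp only [Gf_castSucc]
  rw [← Finset.sum_mul]
  have h1 : (∑ i, (1 - y i)) = Tf m y := rfl
  rw [h1]
  rcases eq_or_ne (Tf m y) 0 with hT | hT
  · rw [hT, (Nf_eq_zero_iff_Tf hy1).2 hT]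
    simp
  · field_simp

lemma Mf_Gf {y : Fin m → ℝ} (hy1 : ∀ i, y i ≤ 1) :
    Mf m (Gf m y) = Nf m y * (Nf m y / Tf m y) := by
  unfold Mf
  simp only [Gf_castSucc]
  rw [sup'_mul_const _ _ (div_nonneg (Nf_nonneg hy1) (Tf_nonneg hy1))]
  rfl

lemma Ff_mem_ccK {K : Set (Finset (Fin m))} {x : Fin (m + 1) → ℝ}
    (hx0 : ∀ i, 0 ≤ x i) (hs : ∑ i, x i = 1) {I : Finset (Fin m)} (hIK : I ∈ K)
    (hIz : ∀ i ∉ I, x i.castSucc = 0) : Ff m x ∈ ccK m K := by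
  have hS0 := Sf_nonneg (m := m) hx0
  have hM0 := Mf_nonneg (m := m) hx0
  have hS1 := Sf_le_one hx0 hs
  have key : ∀ i : Fin m, 0 ≤ x i.castSucc * (Sf m x / Mf m x) ∧
      x i.castSucc * (Sf m x / Mf m x) ≤ 1 := by
    intro i
    refine ⟨mul_nonneg (hx0 _) (div_nonneg hS0 hM0), ?_⟩
    rcases eq_or_ne (Mf m x) 0 with hM | hM
    · simp [hM]
    · have h1 : x i.castSucc * (Sf m x / Mf m x) ≤ Mf m x * (Sf m x / Mf m x) :=
        mul_le_mul_of_nonneg_right (le_Mf x i) (div_nonneg hS0 hM0)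
      have h2 : Mf m x * (Sf m x / Mf m x) = Sf m x := by field_simp
      linarith
  refine ⟨I, hIK, fun i => ?_, fun i hi => ?_⟩
  · have := key i
    unfold Ff
    constructor <;> linarith [this.1, this.2]
  · unfold Ff
    rw [hIz i hi]
    ring

lemma Gf_mem {K : Set (Finset (Fin m))} {y : Fin m → ℝ}
    (hy : ∀ i, 0 ≤ y i ∧ y i ≤ 1) {J : Finset (Fin m)} (hJK : J ∈ K)
    (hJz : ∀ i ∉ J, y i = 1) :
    (∀ i, 0 ≤ Gf m y i) ∧ (∑ i, Gf m y i) = 1 ∧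
      ∃ I ∈ K, ∀ i ∉ I, Gf m y i.castSucc = 0 := by
  have hy1 : ∀ i, y i ≤ 1 := fun i => (hy i).2
  have hN0 := Nf_nonneg (m := m) hy1
  have hN1 := Nf_le_one (m := m) (fun i => (hy i).1)
  have hT0 := Tf_nonneg (m := m) hy1
  refine ⟨?_, ?_, J, hJK, fun i hi => ?_⟩
  · intro k
    induction k using Fin.lastCases with
    | last => rw [Gf_last]; linarith
    | cast i =>
      rw [Gf_castSucc]
      have := hy1 i
      exact mul_nonneg (by linarith) (div_nonneg hN0 hT0)
  · rw [sum_eq_Sf_add_last, Sf_Gf hy1, Gf_last]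
    ring
  · rw [Gf_castSucc, hJz i hi]
    ring

lemma Ff_Gf {y : Fin m → ℝ} (hy1 : ∀ i, y i ≤ 1) : Ff m (Gf m y) = y := by
  funext i
  unfold Ff
  rw [Sf_Gf hy1, Mf_Gf hy1, Gf_castSucc]
  rcases eq_or_ne (Tf m y) 0 with hT | hT
  · have h1 := Tf_eq_zero hy1 hT i
    rw [h1]
    ring
  · have hN : Nf m y ≠ 0 := fun h => hT ((Nf_eq_zero_iff_Tf hy1).1 h)
    field_simp
    ring

lemma Gf_Ff {x : Fin (m + 1) → ℝ} (hx0 : ∀ i, 0 ≤ x i) (hs : ∑ i, x i = 1) :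
    Gf m (Ff m x) = x := by
  have hS0 := Sf_nonneg (m := m) hx0
  have hM0 := Mf_nonneg (m := m) hx0
  have hsub : ∀ i, 1 - Ff m x i = x i.castSucc * (Sf m x / Mf m x) := fun i => by
    unfold Ff; ring
  have hT : Tf m (Ff m x) = Sf m x * (Sf m x / Mf m x) := by
    unfold Tf
    simp only [hsub]
    rw [← Finset.sum_mul]
    rfl
  have hN : Nf m (Ff m x) = Mf m x * (Sf m x / Mf m x) := by
    unfold Nf
    simp only [hsub]
    rw [sup'_mul_const _ _ (div_nonneg hS0 hM0)]
    rfl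
  have hlast : x (Fin.last m) = 1 - Sf m x := by
    have := sum_eq_Sf_add_last (m := m) x; linarith
  funext k
  induction k using Fin.lastCases with
  | last =>
    rw [Gf_last, hN]
    rcases eq_or_ne (Mf m x) 0 with hM | hM
    · have hSz : Sf m x = 0 := Finset.sum_eq_zero fun i _ => Mf_eq_zero hx0 hM i
      rw [hM, hSz, hlast, hSz]
      simp
    · have h2 : Mf m x * (Sf m x / Mf m x) = Sf m x := by field_simp
      rw [h2, hlast]
  | cast i =>
    rw [Gf_castSucc, hsub, hT, hN]
    rcases eq_or_ne (Mf m x) 0 with hM | hM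
    · have := Mf_eq_zero hx0 hM i
      rw [this, hM]
      simp
    · have hSne : Sf m x ≠ 0 := fun h => hM (le_antisymm (h ▸ Mf_le_Sf hx0) hM0)
      field_simp

end Core

section Core2
variable {m : ℕ} [NeZero m]

lemma Ff_contOn : ContinuousOn (Ff m) {x : Fin (m + 1) → ℝ | ∀ i, 0 ≤ x i} := by
  have hScont : Continuous (Sf m) := by
    unfold Sf; exact continuous_finset_sum _ fun j _ => continuous_apply _
  have hMcont : Continuous (Mf m) := by
    unfold Mf
    exact Continuous.finset_sup'_apply Finset.univ_nonempty fun j _ => continuous_apply _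
  rw [continuousOn_pi]
  intro i
  simp only [Ff]
  apply ContinuousOn.sub continuousOn_const
  intro x hx
  rcases eq_or_ne (Mf m x) 0 with hM | hM
  · have hbound : ∀ x' : Fin (m + 1) → ℝ, (∀ k, 0 ≤ x' k) →
        x' i.castSucc * (Sf m x' / Mf m x') ≤ Sf m x' := by
      intro x' hx0'
      rcases eq_or_ne (Mf m x') 0 with hM' | hM'
      · rw [hM']
        simpa using Sf_nonneg (m := m) hx0'
      · have h1 : x' i.castSucc * (Sf m x' / Mf m x') ≤ Mf m x' * (Sf m x' / Mf m x') :=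
          mul_le_mul_of_nonneg_right (le_Mf x' i)
            (div_nonneg (Sf_nonneg hx0') (Mf_nonneg hx0'))
        have h2 : Mf m x' * (Sf m x' / Mf m x') = Sf m x' := by field_simp
        linarith
    have hSx : Sf m x = 0 :=
      Finset.sum_eq_zero fun j _ => Mf_eq_zero hx hM j
    have hval : x i.castSucc * (Sf m x / Mf m x) = 0 := by rw [hM]; simp
    unfold ContinuousWithinAt
    have hval' : (fun x' : Fin (m + 1) → ℝ => x' i.castSucc * (Sf m x' / Mf m x')) x = 0 := hval
    rw [hval']
    apply squeeze_zero'
    · exact eventually_mem_nhdsWithin.mono fun x' hx' =>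
        mul_nonneg (hx' _) (div_nonneg (Sf_nonneg hx') (Mf_nonneg hx'))
    · exact eventually_mem_nhdsWithin.mono fun x' hx' => hbound x' hx'
    · rw [← hSx]
      exact (hScont.tendsto x).mono_left nhdsWithin_le_nhds
  · exact (((continuous_apply _).continuousAt.mul
      ((hScont.continuousAt).div (hMcont.continuousAt) hM))).continuousWithinAt

end Core2

lemma A_compact (m : ℕ) (K : Set (Finset (Fin m))) :
    IsCompact (geomRealization (m + 1) (coneComplex m K)) := by
  unfold geomRealization
  apply Set.Finite.isCompact_biUnion (Set.toFinite _)
  intro I _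
  exact (((I : Set (Fin (m + 1))).toFinite.image _).isCompact_convexHull ℝ)

lemma core (m : ℕ) [NeZero m] (K : Set (Finset (Fin m))) :
    Nonempty (geomRealization (m + 1) (coneComplex m K) ≃ₜ ccK m K) := by
  set A := geomRealization (m + 1) (coneComplex m K) with hA
  have hF : ∀ x : A, Ff m x.1 ∈ ccK m K := by
    rintro ⟨x, hx⟩
    obtain ⟨hx0, hs, I, hIK, hIz⟩ := (memA_iff m K x).1 hx
    exact Ff_mem_ccK hx0 hs hIK hIz
  have hG : ∀ y : ccK m K, Gf m y.1 ∈ A := by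
    rintro ⟨y, J, hJK, hy, hJz⟩
    exact (memA_iff m K _).2 (Gf_mem hy hJK hJz)
  let e : A ≃ ccK m K :=
  { toFun := fun x => ⟨Ff m x.1, hF x⟩
    invFun := fun y => ⟨Gf m y.1, hG y⟩
    left_inv := by
      rintro ⟨x, hx⟩
      obtain ⟨hx0, hs, -⟩ := (memA_iff m K x).1 hx
      exact Subtype.ext (Gf_Ff hx0 hs)
    right_inv := by
      rintro ⟨y, J, hJK, hy, hJz⟩
      exact Subtype.ext (Ff_Gf (fun i => (hy i).2)) }
  haveI : CompactSpace A := isCompact_iff_compactSpace.mp (A_compact m K)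
  have hsub : A ⊆ {x | ∀ i, 0 ≤ x i} := fun x hx => ((memA_iff m K x).1 hx).1
  have hc : Continuous (e : A → ccK m K) :=
    Continuous.subtype_mk
      (continuousOn_iff_continuous_restrict.mp ((Ff_contOn (m := m)).mono hsub)) _
  exact ⟨hc.homeoOfEquivCompactToT2⟩

/-- Theorem: |cone(K)| ⊆ ℝ^{m+1} and cc(K) ⊆ ℝ^m are homeomorphic. -/
theorem stmt10 (m : ℕ) (K : Set (Finset (Fin m)))
    (hK : ∀ I ∈ K, ∀ J ⊆ I, J ∈ K) (hempty : ∅ ∈ K) :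
    Nonempty (geomRealization (m + 1) (coneComplex m K) ≃ₜ ccK m K) := by
  rcases Nat.eq_zero_or_pos m with rfl | hm
  · have hA : geomRealization 1 (coneComplex 0 K) = {(fun _ => 1 : Fin 1 → ℝ)} := by
      ext x
      rw [memA_iff]
      simp only [Set.mem_singleton_iff]
      constructor
      · rintro ⟨h0, hs, -⟩
        rw [Fin.sum_univ_one] at hs
        funext i
        have hi : i = 0 := Subsingleton.elim _ _
        rw [hi, hs]
      · rintro rfl
        exact ⟨fun _ => one_pos.le, by simp, ∅, hempty, fun i => i.elim0⟩
    have hB : ccK 0 K = Set.univ := by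
      ext y
      simp only [Set.mem_univ, iff_true]
      exact ⟨∅, hempty, fun i => i.elim0, fun i => i.elim0⟩
    rw [hA, hB]
    haveI : Unique (Set.univ : Set (Fin 0 → ℝ)) :=
      ⟨⟨⟨default, trivial⟩⟩, fun x => Subtype.ext (Subsingleton.elim _ _)⟩
    exact ⟨Homeomorph.homeomorphOfUnique _ _⟩
  · haveI : NeZero m := ⟨hm.ne'⟩
    exact core m K
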